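/- arXiv:1001.1357 — 3 statements merged into one kernel-verified Lean document; each statement's English description precedes it below -/
import Mathlib

section
/- Let u : (0,∞) → V be measurable with v weak solution data such that the differential inequality (d/dt)|w(t)|² + (νN^{2γ}/(2C₁²) − (2/ν)‖u(t)‖²)|w(t)|² ≤ (2/ν)‖f(t)−g(t)‖²_{V'} + (νN^{2γ}/C₁²)‖R_N w(t)‖²_{L²} holds a.e., where |w(t)|² is absolutely continuous and nonnegative, ‖f(t)−g(t)‖_{V'} → 0 and ‖R_N w(t)‖_{L²} → 0 as t → ∞, limsup_{t→∞}(1/T)∫_t^{t+T}‖u‖²dτ < ∞ for some fixed T > 0, and N^{2γ} > (4C₁²/ν²) limsup_{t→∞}(1/T)∫_t^{t+T}‖u(τ)‖²dτ. Then lim_{t→∞}|w(t)| = 0. -/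
/-!
The largeness of `N` makes the windowed time averages of `α = νN^{2γ}/(2C₁²) − (2/ν)‖u‖²`
eventually exceed some `δ > 0`, so `∫ₛᵗ α ≥ δ (t − s) − C₀` for large `s`. Multiplying
`w2' + α w2 ≤ β` by the integrating factor `exp (∫ α)` (both `w2` and `exp (∫ α)` are absolutely
continuous) gives `w2 t ≤ e^{C₀} (w2 s e^{−δ (t−s)} + sup_{[s,∞)} β / δ)`, and `β → 0`.
-/

open MeasureTheory Filter Set intervalIntegral Real Topology

theorem LipschitzOnWith.comp_absolutelyContinuousOnInterval {X Y : Type*} [PseudoMetricSpace X]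
    [PseudoMetricSpace Y] {g : X → Y} {f : ℝ → X} {K : NNReal} {s : Set X} {a b : ℝ}
    (hg : LipschitzOnWith K g s) (hf : AbsolutelyContinuousOnInterval f a b)
    (hfs : MapsTo f (uIcc a b) s) : AbsolutelyContinuousOnInterval (g ∘ f) a b := by
  unfold AbsolutelyContinuousOnInterval at hf ⊢
  apply squeeze_zero' ?_ ?_ (by simpa using Tendsto.const_mul (K : ℝ) hf)
  · exact Eventually.of_forall fun _ ↦ Finset.sum_nonneg fun _ _ ↦ dist_nonneg
  rw [eventually_inf_principal]
  filter_upwards with E hE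
  rw [Finset.mul_sum]
  gcongr with i hi
  exact hg.dist_le_mul _ (hfs (hE.1 i hi).1) _ (hfs (hE.1 i hi).2)

theorem ContDiff.comp_absolutelyContinuousOnInterval {g f : ℝ → ℝ} {a b : ℝ}
    (hg : ContDiff ℝ 1 g) (hf : AbsolutelyContinuousOnInterval f a b) :
    AbsolutelyContinuousOnInterval (g ∘ f) a b := by
  have hcpt : IsCompact (f '' uIcc a b) := isCompact_uIcc.image_of_continuousOn hf.continuousOn
  obtain ⟨K, hK⟩ := LocallyLipschitzOn.exists_lipschitzOnWith_of_compact hcpt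
    hg.locallyLipschitz.locallyLipschitzOn
  exact hK.comp_absolutelyContinuousOnInterval hf (mapsTo_image f _)

theorem integral_mul_exp_integral_eq_sub {w' α : ℝ → ℝ} {s t : ℝ} (w₀ : ℝ)
    (hw' : IntervalIntegrable w' volume s t) (hα : IntervalIntegrable α volume s t) :
    ∫ x in s..t, (w' x + α x * (w₀ + ∫ y in s..x, w' y)) * exp (∫ y in s..x, α y) =
      (w₀ + ∫ y in s..t, w' y) * exp (∫ y in s..t, α y) - w₀ := by
  have hW : AbsolutelyContinuousOnInterval (fun x ↦ w₀ + ∫ y in s..x, w' y) s t :=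
    contDiffOn_const.absolutelyContinuousOnInterval.add
      (hw'.absolutelyContinuousOnInterval_intervalIntegral left_mem_uIcc)
  have hE : AbsolutelyContinuousOnInterval (fun x ↦ exp (∫ y in s..x, α y)) s t :=
    Real.contDiff_exp.comp_absolutelyContinuousOnInterval
      (hα.absolutelyContinuousOnInterval_intervalIntegral left_mem_uIcc)
  have hprod := hW.integral_deriv_mul_eq_sub hE
  simp only [integral_same, add_zero, exp_zero, mul_one] at hprod
  rw [← hprod]
  refine integral_congr_ae ?_
  filter_upwards [hw'.ae_hasDerivAt_integral, hα.ae_hasDerivAt_integral] with x hw'x hαx hx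
  have hx' : x ∈ uIcc s t := uIoc_subset_uIcc hx
  rw [((hw'x hx' s left_mem_uIcc).const_add w₀).deriv, ((hαx hx' s left_mem_uIcc).exp).deriv]
  ring

theorem mul_exp_integral_le_of_deriv_add_mul_le {w w' α : ℝ → ℝ} {s t c : ℝ} (hst : s ≤ t)
    (hw' : IntervalIntegrable w' volume s t) (hα : IntervalIntegrable α volume s t)
    (hw : ∀ x ∈ Icc s t, w x - w s = ∫ y in s..x, w' y)
    (hineq : ∀ᵐ x, x ∈ Icc s t → w' x + α x * w x ≤ c) :
    w t * exp (∫ x in s..t, α x) ≤ w s + c * ∫ x in s..t, exp (∫ y in s..x, α y) := by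
  set E : ℝ → ℝ := fun x ↦ exp (∫ y in s..x, α y)
  have hEc : ContinuousOn E (uIcc s t) :=
    continuous_exp.comp_continuousOn (continuousOn_primitive_interval' hα left_mem_uIcc)
  have hw_eq : ∀ x ∈ uIcc s t, w x = w s + ∫ y in s..x, w' y := fun x hx ↦ by
    rw [uIcc_of_le hst] at hx
    linarith [hw x hx]
  have hwc : ContinuousOn w (uIcc s t) :=
    (continuousOn_const.add (continuousOn_primitive_interval' hw' left_mem_uIcc)).congr hw_eq
  have hint : IntervalIntegrable (fun x ↦ (w' x + α x * w x) * E x) volume s t := by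
    simp only [add_mul, mul_assoc]
    exact (hw'.mul_continuousOn hEc).add (hα.mul_continuousOn (hwc.mul hEc))
  have hle : ∫ x in s..t, (w' x + α x * w x) * E x ≤ ∫ x in s..t, c * E x := by
    refine integral_mono_ae_restrict hst hint (hEc.intervalIntegrable.const_mul c) ?_
    filter_upwards [ae_restrict_of_ae hineq, ae_restrict_mem measurableSet_Icc] with x hx hxI
    exact mul_le_mul_of_nonneg_right (hx hxI) (exp_pos _).le
  calc w t * E t = (w s + ∫ y in s..t, w' y) * E t := by rw [← hw_eq t right_mem_uIcc]
    _ = w s + ∫ x in s..t, (w' x + α x * (w s + ∫ y in s..x, w' y)) * E x := by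
      rw [integral_mul_exp_integral_eq_sub (w s) hw' hα]; ring
    _ = w s + ∫ x in s..t, (w' x + α x * w x) * E x := by
      congr 1
      exact integral_congr fun x hx ↦ by rw [← hw_eq x hx]
    _ ≤ w s + c * ∫ x in s..t, E x := by rw [← intervalIntegral.integral_const_mul]; linarith

theorem integral_exp_mul_sub_le {δ : ℝ} (hδ : 0 < δ) (s t : ℝ) :
    ∫ x in s..t, exp (δ * (x - t)) ≤ 1 / δ := by
  have hderiv : ∀ x ∈ uIcc s t,
      HasDerivAt (fun x ↦ exp (δ * (x - t)) / δ) (exp (δ * (x - t))) x := by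
    intro x _
    have hlin : HasDerivAt (fun x ↦ δ * (x - t)) δ x := by
      simpa using ((hasDerivAt_id' x).sub_const t).const_mul δ
    exact (hlin.exp.div_const δ).congr_deriv (by field_simp)
  rw [integral_eq_sub_of_hasDerivAt hderiv (Continuous.intervalIntegrable (by fun_prop) _ _)]
  simp only [sub_self, mul_zero, exp_zero]
  have : 0 < exp (δ * (s - t)) / δ := by positivity
  linarith

theorem le_of_deriv_add_mul_le_of_integral_ge {w w' α : ℝ → ℝ} {s t c δ C₀ : ℝ}
    (hst : s ≤ t) (hδ : 0 < δ) (hc : 0 ≤ c) (hws : 0 ≤ w s)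
    (hw' : IntervalIntegrable w' volume s t) (hα : IntervalIntegrable α volume s t)
    (hw : ∀ x ∈ Icc s t, w x - w s = ∫ y in s..x, w' y)
    (hineq : ∀ᵐ x, x ∈ Icc s t → w' x + α x * w x ≤ c)
    (hα_lower : ∀ x ∈ Icc s t, δ * (t - x) - C₀ ≤ ∫ y in x..t, α y) :
    w t ≤ exp C₀ * (w s * exp (δ * (s - t)) + c / δ) := by
  set A : ℝ → ℝ := fun x ↦ ∫ y in s..x, α y
  have hexp_le : ∀ x ∈ Icc s t, exp (A x) ≤ exp (A t) * (exp C₀ * exp (δ * (x - t))) := by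
    intro x hx
    have hsplit : A t - A x = ∫ y in x..t, α y :=
      integral_interval_sub_left hα (hα.mono_set (uIcc_subset_uIcc_left (by
        rwa [uIcc_of_le hst])))
    rw [← exp_add, ← exp_add]
    exact exp_le_exp.2 (by linarith [hα_lower x hx])
  have hI : ∫ x in s..t, exp (A x) ≤ exp (A t) * (exp C₀ * (1 / δ)) := by
    calc ∫ x in s..t, exp (A x)
        ≤ ∫ x in s..t, exp (A t) * (exp C₀ * exp (δ * (x - t))) :=
          integral_mono_on hst
            (continuous_exp.comp_continuousOn
              (continuousOn_primitive_interval' hα left_mem_uIcc)).intervalIntegrable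
            (Continuous.intervalIntegrable (by fun_prop) _ _) hexp_le
      _ = exp (A t) * (exp C₀ * ∫ x in s..t, exp (δ * (x - t))) := by
          rw [intervalIntegral.integral_const_mul, intervalIntegral.integral_const_mul]
      _ ≤ exp (A t) * (exp C₀ * (1 / δ)) := by
          gcongr; exact integral_exp_mul_sub_le hδ s t
  have hone : 1 ≤ exp (A t) * (exp C₀ * exp (δ * (s - t))) := by
    simpa [A] using hexp_le s (left_mem_Icc.2 hst)
  have key := mul_exp_integral_le_of_deriv_add_mul_le hst hw' hα hw hineq
  refine le_of_mul_le_mul_right (a := exp (A t)) ?_ (exp_pos _)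
  calc w t * exp (A t) ≤ w s * 1 + c * ∫ x in s..t, exp (A x) := by simpa using key
    _ ≤ w s * (exp (A t) * (exp C₀ * exp (δ * (s - t))))
        + c * (exp (A t) * (exp C₀ * (1 / δ))) := by gcongr
    _ = exp C₀ * (w s * exp (δ * (s - t)) + c / δ) * exp (A t) := by ring

theorem tendsto_zero_of_deriv_add_mul_le {w w' α β : ℝ → ℝ} {δ C₀ : ℝ} (hδ : 0 < δ)
    (hw_nonneg : ∀ᶠ s in atTop, 0 ≤ w s)
    (hw' : ∀ᶠ s in atTop, ∀ t, s ≤ t → IntervalIntegrable w' volume s t)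
    (hw : ∀ᶠ s in atTop, ∀ t, s ≤ t → w t - w s = ∫ y in s..t, w' y)
    (hα : ∀ᶠ s in atTop, ∀ t, s ≤ t → IntervalIntegrable α volume s t)
    (hα_lower : ∀ᶠ s in atTop, ∀ t, s ≤ t → δ * (t - s) - C₀ ≤ ∫ y in s..t, α y)
    (hineq : ∀ᶠ s in atTop, ∀ᵐ t, s ≤ t → w' t + α t * w t ≤ β t)
    (hβ : Tendsto β atTop (𝓝 0)) : Tendsto w atTop (𝓝 0) := by
  refine tendsto_order.2 ⟨fun a ha ↦ hw_nonneg.mono fun t ht ↦ ha.trans_le ht, fun ε hε ↦ ?_⟩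
  set c := ε * δ / (2 * exp C₀)
  have hc : 0 < c := by positivity
  obtain ⟨s₁, hs₁⟩ := eventually_atTop.1 (hα_lower.and (hβ.eventually (gt_mem_nhds hc)))
  obtain ⟨s, hs₁s, hws, hw's, hws', hαs, hineqs⟩ := ((eventually_ge_atTop s₁).and
    (hw_nonneg.and (hw'.and (hw.and (hα.and hineq))))).exists
  have hbound : ∀ t, s ≤ t → w t ≤ exp C₀ * (w s * exp (δ * (s - t)) + c / δ) := by
    intro t hst
    refine le_of_deriv_add_mul_le_of_integral_ge hst hδ hc.le hws (hw's t hst) (hαs t hst)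
      (fun x hx ↦ hws' x hx.1) ?_ (fun x hx ↦ (hs₁ x (hs₁s.trans hx.1)).1 t hx.2)
    filter_upwards [hineqs] with x hx hxI
    exact (hx hxI.1).trans (hs₁ x (hs₁s.trans hxI.1)).2.le
  have hdecay : Tendsto (fun t ↦ exp C₀ * (w s * exp (δ * (s - t)) + c / δ)) atTop
      (𝓝 (exp C₀ * (w s * 0 + c / δ))) := by
    refine ((tendsto_exp_atBot.comp ?_).const_mul _ |>.add_const _).const_mul _
    exact (tendsto_atBot_add_const_left _ s tendsto_neg_atTop_atBot).const_mul_atBot hδ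
  have hlim : exp C₀ * (w s * 0 + c / δ) < ε := by
    simp only [c, mul_zero, zero_add]
    field_simp
    linarith
  filter_upwards [hdecay.eventually (gt_mem_nhds hlim), eventually_ge_atTop s] with t ht hst
  exact (hbound t hst).trans_lt ht

theorem integral_le_of_forall_window_le {b : ℝ → ℝ} {t₀ T M : ℝ} (hT : 0 < T) (hb : ∀ x, 0 ≤ b x)
    (hint : ∀ s t, t₀ ≤ s → s ≤ t → IntervalIntegrable b volume s t)
    (hwin : ∀ s, t₀ ≤ s → ∫ x in s..s + T, b x ≤ M * T) {s t : ℝ} (hs : t₀ ≤ s) (hst : s ≤ t) :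
    ∫ x in s..t, b x ≤ M * (t - s + T) := by
  have hM : 0 ≤ M := nonneg_of_mul_nonneg_left
    ((integral_nonneg (by linarith) fun x _ ↦ hb x).trans (hwin t₀ le_rfl)) hT
  have hwindows : ∀ n : ℕ, ∀ s, t₀ ≤ s → ∫ x in s..s + n * T, b x ≤ n * (M * T) := by
    intro n
    induction n with
    | zero => intro s _; simp
    | succ n ih =>
      intro s hs
      have hnT : 0 ≤ (n : ℝ) * T := by positivity
      rw [← integral_add_adjacent_intervals (hint s (s + T) hs (by linarith))
        (hint (s + T) _ (by linarith) (by push_cast; linarith))]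
      have hrest := ih (s + T) (by linarith)
      have hfirst := hwin s hs
      rw [show s + (n + 1 : ℕ) * T = s + T + n * T by push_cast; ring]
      push_cast
      linarith
  set n := ⌈(t - s) / T⌉₊
  have hn_ge : t ≤ s + n * T := by
    have := (div_le_iff₀ hT).1 (Nat.le_ceil ((t - s) / T))
    linarith
  have hn_le : n * T ≤ t - s + T := by
    have := (Nat.ceil_lt_add_one (div_nonneg (sub_nonneg.2 hst) hT.le)).le
    rwa [div_add_one hT.ne', le_div_iff₀ hT] at this
  calc ∫ x in s..t, b x ≤ ∫ x in s..s + n * T, b x :=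
        integral_mono_interval le_rfl hst hn_ge (ae_of_all _ hb) (hint s _ hs (by linarith))
    _ ≤ n * (M * T) := hwindows n s hs
    _ ≤ M * (t - s + T) := by nlinarith

theorem exists_integral_sub_mul_ge_of_limsup_lt {b : ℝ → ℝ} {T K κ : ℝ} (hT : 0 < T) (hκ : 0 < κ)
    (hb : ∀ x, 0 ≤ b x) (hint : ∀ᶠ s in atTop, ∀ t, s ≤ t → IntervalIntegrable b volume s t)
    (hbdd : IsBoundedUnder (· ≤ ·) atTop fun t ↦ (1 / T) * ∫ x in t..t + T, b x)
    (hK : κ * limsup (fun t ↦ (1 / T) * ∫ x in t..t + T, b x) atTop < K) :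
    ∃ δ > 0, ∃ C₀, ∀ᶠ s in atTop, ∀ t, s ≤ t → δ * (t - s) - C₀ ≤ ∫ x in s..t, (K - κ * b x) := by
  set L := limsup (fun t ↦ (1 / T) * ∫ x in t..t + T, b x) atTop
  set δ := (K - κ * L) / 2 with hδ
  have hL : L < (K - δ) / κ := by rw [lt_div_iff₀ hκ]; linarith [hδ]
  obtain ⟨t₀, ht₀⟩ := eventually_atTop.1 ((eventually_lt_of_limsup_lt hL hbdd).and hint)
  have hwin : ∀ s, t₀ ≤ s → ∫ x in s..s + T, b x ≤ (K - δ) / κ * T := fun s hs ↦ by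
    have := (ht₀ s hs).1
    rw [one_div, inv_mul_lt_iff₀ hT] at this
    linarith
  refine ⟨δ, by linarith [hδ], (K - δ) * T, eventually_atTop.2 ⟨t₀, fun s hs t hst ↦ ?_⟩⟩
  have hint_t₀ : ∀ p q, t₀ ≤ p → p ≤ q → IntervalIntegrable b volume p q :=
    fun p q hp hpq ↦ (ht₀ p hp).2 q hpq
  have hbound := integral_le_of_forall_window_le hT hb hint_t₀ hwin hs hst
  rw [integral_sub intervalIntegrable_const ((hint_t₀ s t hs hst).const_mul κ),
    intervalIntegral.integral_const_mul, intervalIntegral.integral_const, smul_eq_mul]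
  have : κ * ∫ x in s..t, b x ≤ (K - δ) * (t - s + T) := by
    calc κ * ∫ x in s..t, b x ≤ κ * ((K - δ) / κ * (t - s + T)) := by gcongr
      _ = (K - δ) * (t - s + T) := by field_simp
  nlinarith

theorem determining_projection_2d_core_general
    (ν C₁ γ N T : ℝ) (hν : 0 < ν) (hC₁ : 0 < C₁) (hT : 0 < T)
    (w2 w2' nu fg Rw : ℝ → ℝ)
    (hw2_nonneg : ∀ t, 0 < t → 0 ≤ w2 t)
    (hw2_int : ∀ s t, 0 < s → s ≤ t → IntervalIntegrable w2' volume s t)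
    (hw2_ac : ∀ s t, 0 < s → s ≤ t → w2 t - w2 s = ∫ τ in s..t, w2' τ)
    (hnu_loc : LocallyIntegrableOn (fun t => nu t ^ 2) (Set.Ioi 0))
    (hineq : ∀ᵐ t ∂volume, t ∈ Set.Ioi (0:ℝ) →
      w2' t + (ν * N ^ (2 * γ) / (2 * C₁ ^ 2) - (2 / ν) * nu t ^ 2) * w2 t ≤
        (2 / ν) * fg t ^ 2 + (ν * N ^ (2 * γ) / C₁ ^ 2) * Rw t ^ 2)
    (hfg : Tendsto fg atTop (nhds 0))
    (hRw : Tendsto Rw atTop (nhds 0))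
    (hbdd : IsBoundedUnder (· ≤ ·) atTop (fun t => (1 / T) * ∫ τ in t..(t + T), nu τ ^ 2))
    (hNlarge : (4 * C₁ ^ 2 / ν ^ 2) *
        limsup (fun t => (1 / T) * ∫ τ in t..(t + T), nu τ ^ 2) atTop < N ^ (2 * γ)) :
    Tendsto (fun t => Real.sqrt (w2 t)) atTop (nhds 0) := by
  have hpos := eventually_gt_atTop (0 : ℝ)
  have hnu_int : ∀ᶠ s in atTop, ∀ t, s ≤ t → IntervalIntegrable (fun t ↦ nu t ^ 2) volume s t :=
    hpos.mono fun s hs t hst ↦ (hnu_loc.integrableOn_compact_subset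
      (fun x hx ↦ hs.trans_le (by rw [uIcc_of_le hst] at hx; exact hx.1))
      isCompact_uIcc).intervalIntegrable
  have hK : 2 / ν * limsup (fun t ↦ (1 / T) * ∫ τ in t..(t + T), nu τ ^ 2) atTop <
      ν * N ^ (2 * γ) / (2 * C₁ ^ 2) := by
    calc _ = ν / (2 * C₁ ^ 2) *
          (4 * C₁ ^ 2 / ν ^ 2 * limsup (fun t ↦ (1 / T) * ∫ τ in t..(t + T), nu τ ^ 2) atTop) := by
          field_simp; ring
      _ < ν / (2 * C₁ ^ 2) * N ^ (2 * γ) := by gcongr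
      _ = _ := by ring
  obtain ⟨δ, hδ, C₀, hα_lower⟩ := exists_integral_sub_mul_ge_of_limsup_lt hT (by positivity)
    (fun x ↦ sq_nonneg (nu x)) hnu_int hbdd hK
  have hw2 : Tendsto w2 atTop (𝓝 0) := by
    refine tendsto_zero_of_deriv_add_mul_le hδ (hpos.mono hw2_nonneg)
      (hpos.mono fun s hs t hst ↦ hw2_int s t hs hst) (hpos.mono fun s hs t hst ↦ hw2_ac s t hs hst)
      (hnu_int.mono fun s hs t hst ↦ intervalIntegrable_const.sub ((hs t hst).const_mul _))
      hα_lower (hpos.mono fun s hs ↦ hineq.mono fun t ht hst ↦ ht (hs.trans_le hst)) ?_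
    simpa using ((hfg.pow 2).const_mul (2 / ν)).add
      ((hRw.pow 2).const_mul (ν * N ^ (2 * γ) / C₁ ^ 2))
  exact sqrt_zero ▸ (continuous_sqrt.tendsto 0).comp hw2

/-- Core step of the 2D determining-projection theorem: if `w2 t = |w(t)|²`
(absolutely continuous, nonnegative) satisfies a.e. the differential inequality
`w2' + (νN^{2γ}/(2C₁²) − (2/ν)‖u‖²) w2 ≤ (2/ν)‖f−g‖²_{V'} + (νN^{2γ}/C₁²)‖R_N w‖²_{L²}`,
with `‖f−g‖_{V'} → 0`, `‖R_N w‖_{L²} → 0`, finite limsup of the time averages of `‖u‖²`,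
and `N^{2γ} > (4C₁²/ν²) limsup (1/T)∫_t^{t+T}‖u‖²`, then `|w(t)| → 0`.
Here `nu t = ‖u(t)‖`, `fg t = ‖f(t)−g(t)‖_{V'}`, `Rw t = ‖R_N w(t)‖_{L²}`. -/
theorem determining_projection_2d_core
    (ν C₁ γ N T : ℝ) (hν : 0 < ν) (hC₁ : 0 < C₁) (hγ : 0 < γ) (hN : 1 ≤ N) (hT : 0 < T)
    (w2 w2' nu fg Rw : ℝ → ℝ)
    (hw2_nonneg : ∀ t, 0 < t → 0 ≤ w2 t)
    (hw2_int : ∀ s t, 0 < s → s ≤ t → IntervalIntegrable w2' volume s t)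
    (hw2_ac : ∀ s t, 0 < s → s ≤ t → w2 t - w2 s = ∫ τ in s..t, w2' τ)
    (hnu_loc : LocallyIntegrableOn (fun t => nu t ^ 2) (Set.Ioi 0))
    (hineq : ∀ᵐ t ∂volume, t ∈ Set.Ioi (0:ℝ) →
      w2' t + (ν * N ^ (2 * γ) / (2 * C₁ ^ 2) - (2 / ν) * nu t ^ 2) * w2 t ≤
        (2 / ν) * fg t ^ 2 + (ν * N ^ (2 * γ) / C₁ ^ 2) * Rw t ^ 2)
    (hfg : Tendsto fg atTop (nhds 0))
    (hRw : Tendsto Rw atTop (nhds 0))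
    (hbdd : IsBoundedUnder (· ≤ ·) atTop (fun t => (1 / T) * ∫ τ in t..(t + T), nu τ ^ 2))
    (hNlarge : (4 * C₁ ^ 2 / ν ^ 2) *
        limsup (fun t => (1 / T) * ∫ τ in t..(t + T), nu τ ^ 2) atTop < N ^ (2 * γ)) :
    Tendsto (fun t => Real.sqrt (w2 t)) atTop (nhds 0) :=
  determining_projection_2d_core_general ν C₁ γ N T hν hC₁ hT w2 w2' nu fg Rw hw2_nonneg hw2_int
    hw2_ac hnu_loc hineq hfg hRw hbdd hNlarge
end

section
/- Let y : (0,∞) → [0,∞) be absolutely continuous, and suppose y'(t) + α(t)y(t) ≤ β(t) a.e., where α(t) = K − φ(t) with K > 0 constant and φ ≥ 0 locally integrable satisfying limsup_{t→∞}(1/T)∫_t^{t+T}φ(τ)dτ < K for some fixed T > 0, and β ≥ 0 locally integrable with lim_{t→∞}(1/T)∫_t^{t+T}β(τ)dτ = 0. Then lim_{t→∞} y(t) = 0. -/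
open MeasureTheory Filter Set Topology

/-!
With the integrating factor `E(t) = exp ∫ₛᵗ (K - φ)`, the product `y E` is absolutely continuous
and `(y E)' = (y' + (K - φ) y) E ≤ β E`. On a window `[s, s + T]` whose `φ`-integral is at most
`m T` with `m < K` this gives `y r ≤ exp (m T - K (r - s)) (y s + e^{K T} ∫ₛ^{s+T} β)`. So along
the grid `s + n T` the values of `y` contract by the factor `exp ((m - K) T) < 1` up to a forcing
term that tends to zero, and in between they are controlled by the preceding grid value.
-/

namespace AbsolutelyContinuousOnInterval

variable {X Y : Type*} [PseudoMetricSpace X] [PseudoMetricSpace Y] {a b : ℝ}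

theorem congr {f g : ℝ → X} (hf : AbsolutelyContinuousOnInterval f a b)
    (hfg : EqOn f g (uIcc a b)) : AbsolutelyContinuousOnInterval g a b := by
  refine hf.congr' ?_
  rw [EventuallyEq, eventually_inf_principal]
  filter_upwards with E hE
  refine Finset.sum_congr rfl fun i hi => ?_
  rw [hfg (hE.1 i hi).1, hfg (hE.1 i hi).2]

theorem _root_.LipschitzOnWith.comp_absolutelyContinuousOnInterval_s7 {g : X → Y} {f : ℝ → X}
    {s : Set X} {L : NNReal} (hg : LipschitzOnWith L g s)
    (hf : AbsolutelyContinuousOnInterval f a b) (hfs : MapsTo f (uIcc a b) s) :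
    AbsolutelyContinuousOnInterval (g ∘ f) a b := by
  unfold AbsolutelyContinuousOnInterval at hf ⊢
  refine squeeze_zero' (.of_forall fun _ => Finset.sum_nonneg fun _ _ => dist_nonneg) ?_
    (by simpa using hf.const_mul (L : ℝ))
  rw [eventually_inf_principal]
  filter_upwards with E hE
  rw [Finset.mul_sum]
  gcongr with i hi
  exact hg.dist_le_mul _ (hfs (hE.1 i hi).1) _ (hfs (hE.1 i hi).2)

theorem exp {f : ℝ → ℝ} (hf : AbsolutelyContinuousOnInterval f a b) :
    AbsolutelyContinuousOnInterval (fun x => Real.exp (f x)) a b := by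
  obtain ⟨C, hC⟩ := hf.exists_bound
  obtain ⟨L, hL⟩ := (Real.contDiff_exp.contDiffOn (s := Icc (-C) C) (n := 1)).exists_lipschitzOnWith
    one_ne_zero (convex_Icc _ _) isCompact_Icc
  exact hL.comp_absolutelyContinuousOnInterval_s7 hf fun x hx => abs_le.mp (hC x hx)

end AbsolutelyContinuousOnInterval

section Primitive

variable {a b : ℝ} {y y' : ℝ → ℝ}

theorem absolutelyContinuousOnInterval_of_sub_eq_integral (hy' : IntervalIntegrable y' volume a b)
    (hy : ∀ t ∈ uIcc a b, y t - y a = ∫ τ in a..t, y' τ) :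
    AbsolutelyContinuousOnInterval y a b := by
  have hconst : AbsolutelyContinuousOnInterval (fun _ => y a) a b :=
    (LipschitzWith.const (y a)).lipschitzOnWith.absolutelyContinuousOnInterval
  refine (hconst.fun_add (hy'.absolutelyContinuousOnInterval_intervalIntegral
    left_mem_uIcc)).congr fun t ht => ?_
  simp only [← hy t ht, add_sub_cancel]

theorem ae_hasDerivAt_of_sub_eq_integral (hy' : IntervalIntegrable y' volume a b)
    (hy : ∀ t ∈ uIcc a b, y t - y a = ∫ τ in a..t, y' τ) :
    ∀ᵐ t, t ∈ Ioo (min a b) (max a b) → HasDerivAt y (y' t) t := by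
  filter_upwards [hy'.ae_hasDerivAt_integral] with t ht hmem
  have hIcc : uIcc a b ∈ 𝓝 t := Icc_mem_nhds hmem.1 hmem.2
  refine ((ht (Ioo_subset_Icc_self hmem) a left_mem_uIcc).const_add (y a)).congr_of_eventuallyEq ?_
  filter_upwards [hIcc] with τ hτ
  rw [← hy τ hτ, add_sub_cancel]

end Primitive

theorem mul_exp_integral_sub_le_integral {a b : ℝ} (hab : a ≤ b) {y y' α β : ℝ → ℝ}
    (hy' : IntervalIntegrable y' volume a b) (hy : ∀ t ∈ Icc a b, y t - y a = ∫ τ in a..t, y' τ)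
    (hα : IntervalIntegrable α volume a b) (hβ : IntervalIntegrable β volume a b)
    (h : ∀ᵐ t, t ∈ Icc a b → y' t + α t * y t ≤ β t) :
    y b * Real.exp (∫ τ in a..b, α τ) - y a
      ≤ ∫ t in a..b, β t * Real.exp (∫ τ in a..t, α τ) := by
  rw [← uIcc_of_le hab] at hy
  set E : ℝ → ℝ := fun t => Real.exp (∫ τ in a..t, α τ)
  have hE : AbsolutelyContinuousOnInterval E a b :=
    (hα.absolutelyContinuousOnInterval_intervalIntegral left_mem_uIcc).exp
  have hyac := absolutelyContinuousOnInterval_of_sub_eq_integral hy' hy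
  have hderiv : ∀ᵐ t, t ∈ uIoc a b →
      deriv y t * E t + y t * deriv E t = (y' t + α t * y t) * E t := by
    filter_upwards [ae_hasDerivAt_of_sub_eq_integral hy' hy, hα.ae_hasDerivAt_integral,
      Measure.ae_ne volume b] with t hyt hαt hb ht
    rw [uIoc_of_le hab] at ht
    have hmem : t ∈ Ioo (min a b) (max a b) := by
      rw [min_eq_left hab, max_eq_right hab]; exact ⟨ht.1, lt_of_le_of_ne ht.2 hb⟩
    rw [(hyt hmem).deriv, ((hαt (Ioo_subset_Icc_self hmem) a left_mem_uIcc).exp).deriv]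
    ring
  have hproduct : y b * E b - y a = ∫ t in a..b, (y' t + α t * y t) * E t := by
    have hEa : E a = 1 := by simp [E]
    rw [← mul_one (y a), ← hEa, ← hyac.integral_deriv_mul_eq_sub hE]
    exact intervalIntegral.integral_congr_ae hderiv
  rw [hproduct]
  refine intervalIntegral.integral_mono_ae_restrict hab
    ((hy'.add (hα.mul_continuousOn hyac.continuousOn)).mul_continuousOn hE.continuousOn)
    (hβ.mul_continuousOn hE.continuousOn) ?_
  filter_upwards [ae_restrict_of_ae h, ae_restrict_mem measurableSet_Icc] with t ht hmem
  exact mul_le_mul_of_nonneg_right (ht hmem) (Real.exp_pos _).le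

theorem integral_mul_exp_integral_le_of_le_const {s r b K : ℝ} (hsr : s ≤ r) (hrb : r ≤ b)
    (hK : 0 ≤ K) {α β : ℝ → ℝ} (hα : IntervalIntegrable α volume s r) (hαK : ∀ t, α t ≤ K)
    (hβ : IntervalIntegrable β volume s b) (hβ0 : ∀ t, 0 ≤ β t) :
    ∫ t in s..r, β t * Real.exp (∫ τ in s..t, α τ) ≤ Real.exp (K * (b - s)) * ∫ τ in s..b, β τ := by
  have hβr : IntervalIntegrable β volume s r :=
    hβ.mono_set (uIcc_subset_uIcc_left (by rw [uIcc_of_le (hsr.trans hrb)]; exact ⟨hsr, hrb⟩))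
  have hα_le : ∀ t ∈ Icc s r, ∫ τ in s..t, α τ ≤ K * (b - s) := by
    intro t ht
    have hαt : IntervalIntegrable α volume s t :=
      hα.mono_set (uIcc_subset_uIcc_left (by rw [uIcc_of_le hsr]; exact ht))
    calc ∫ τ in s..t, α τ ≤ ∫ _ in s..t, K :=
          intervalIntegral.integral_mono_on ht.1 hαt intervalIntegrable_const fun τ _ => hαK τ
      _ = K * (t - s) := by rw [intervalIntegral.integral_const, smul_eq_mul, mul_comm]
      _ ≤ K * (b - s) := mul_le_mul_of_nonneg_left (by linarith [ht.2]) hK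
  calc ∫ t in s..r, β t * Real.exp (∫ τ in s..t, α τ)
      ≤ ∫ t in s..r, β t * Real.exp (K * (b - s)) :=
        intervalIntegral.integral_mono_on hsr
          (hβr.mul_continuousOn (hα.absolutelyContinuousOnInterval_intervalIntegral
            left_mem_uIcc).exp.continuousOn)
          (hβr.mul_const _) fun t ht =>
            mul_le_mul_of_nonneg_left (Real.exp_le_exp.2 (hα_le t ht)) (hβ0 t)
    _ = Real.exp (K * (b - s)) * ∫ τ in s..r, β τ := by
        rw [intervalIntegral.integral_mul_const, mul_comm]
    _ ≤ Real.exp (K * (b - s)) * ∫ τ in s..b, β τ := by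
        gcongr
        exact intervalIntegral.integral_mono_interval le_rfl hsr hrb (.of_forall hβ0) hβ

theorem le_exp_mul_of_deriv_add_const_sub_mul_le {s r b K M : ℝ} (hsr : s ≤ r) (hrb : r ≤ b)
    (hK : 0 ≤ K) {y y' φ β : ℝ → ℝ} (hys : 0 ≤ y s)
    (hy' : IntervalIntegrable y' volume s r) (hy : ∀ t ∈ Icc s r, y t - y s = ∫ τ in s..t, y' τ)
    (hφ : IntervalIntegrable φ volume s b) (hφ0 : ∀ t, 0 ≤ φ t) (hφM : ∫ τ in s..b, φ τ ≤ M)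
    (hβ : IntervalIntegrable β volume s b) (hβ0 : ∀ t, 0 ≤ β t)
    (h : ∀ᵐ t, t ∈ Icc s r → y' t + (K - φ t) * y t ≤ β t) :
    y r ≤ Real.exp (M - K * (r - s)) * (y s + Real.exp (K * (b - s)) * ∫ τ in s..b, β τ) := by
  have hsub : uIcc s r ⊆ uIcc s b :=
    uIcc_subset_uIcc_left (by rw [uIcc_of_le (hsr.trans hrb)]; exact ⟨hsr, hrb⟩)
  have hφr : IntervalIntegrable φ volume s r := hφ.mono_set hsub
  have hKφ : IntervalIntegrable (fun τ => K - φ τ) volume s r := intervalIntegrable_const.sub hφr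
  have hβ_int : 0 ≤ ∫ τ in s..b, β τ :=
    intervalIntegral.integral_nonneg (hsr.trans hrb) fun τ _ => hβ0 τ
  have hexponent : ∫ τ in s..r, (K - φ τ) = K * (r - s) - ∫ τ in s..r, φ τ := by
    rw [intervalIntegral.integral_sub intervalIntegrable_const hφr,
      intervalIntegral.integral_const, smul_eq_mul, mul_comm]
  have hφM' : ∫ τ in s..r, φ τ ≤ M :=
    (intervalIntegral.integral_mono_interval le_rfl hsr hrb (.of_forall hφ0) hφ).trans hφM
  have hcomparison := (mul_exp_integral_sub_le_integral hsr hy' hy hKφ (hβ.mono_set hsub) h).trans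
    (integral_mul_exp_integral_le_of_le_const hsr hrb hK hKφ (fun t => sub_le_self K (hφ0 t))
      hβ hβ0)
  calc y r = Real.exp ((∫ τ in s..r, φ τ) - K * (r - s))
        * (y r * Real.exp (∫ τ in s..r, (K - φ τ))) := by
        rw [hexponent, mul_left_comm, ← Real.exp_add]
        simp
    _ ≤ Real.exp ((∫ τ in s..r, φ τ) - K * (r - s))
        * (y s + Real.exp (K * (b - s)) * ∫ τ in s..b, β τ) :=
        mul_le_mul_of_nonneg_left (by linarith) (Real.exp_pos _).le
    _ ≤ Real.exp (M - K * (r - s)) * (y s + Real.exp (K * (b - s)) * ∫ τ in s..b, β τ) :=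
        mul_le_mul_of_nonneg_right (Real.exp_le_exp.2 (by linarith))
          (add_nonneg hys (mul_nonneg (Real.exp_pos _).le hβ_int))

theorem tendsto_zero_of_le_mul_add {q : ℝ} (hq0 : 0 ≤ q) (hq1 : q < 1) {u c : ℕ → ℝ}
    (hu0 : ∀ n, 0 ≤ u n) (hu : ∀ n, u (n + 1) ≤ q * u n + c n) (hc : Tendsto c atTop (𝓝 0)) :
    Tendsto u atTop (𝓝 0) := by
  refine tendsto_order.2 ⟨fun ε hε => .of_forall fun n => hε.trans_le (hu0 n), fun ε hε => ?_⟩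
  obtain ⟨N, hN⟩ := eventually_atTop.1
    (hc.eventually (eventually_le_nhds (show 0 < (1 - q) * (ε / 2) by nlinarith)))
  have hbound : ∀ n ≥ N, u n ≤ q ^ (n - N) * u N + ε / 2 := by
    intro n hn
    induction n, hn using Nat.le_induction with
    | base => simp only [Nat.sub_self, pow_zero, one_mul]; linarith
    | succ n hn ih =>
      calc u (n + 1) ≤ q * u n + c n := hu n
        _ ≤ q * (q ^ (n - N) * u N + ε / 2) + (1 - q) * (ε / 2) := by gcongr; exact hN n hn
        _ = q ^ (n + 1 - N) * u N + ε / 2 := by rw [Nat.sub_add_comm hn, pow_succ]; ring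
  have hgeom : Tendsto (fun n => q ^ (n - N) * u N + ε / 2) atTop (𝓝 (ε / 2)) := by
    simpa using (((tendsto_pow_atTop_nhds_zero_of_lt_one hq0 hq1).comp
      (tendsto_sub_atTop_nat N)).mul_const (u N)).add_const (ε / 2)
  filter_upwards [eventually_ge_atTop N, hgeom.eventually (gt_mem_nhds (half_lt_self hε))]
    with n hn hlt
  exact (hbound n hn).trans_lt hlt

theorem tendsto_zero_of_window_contraction {y c : ℝ → ℝ} {t₀ T q C : ℝ} (hT : 0 < T)
    (hq0 : 0 ≤ q) (hq1 : q < 1) (hy0 : ∀ t ≥ t₀, 0 ≤ y t) (hc : Tendsto c atTop (𝓝 0))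
    (hstep : ∀ s ≥ t₀, y (s + T) ≤ q * (y s + c s))
    (hwindow : ∀ s ≥ t₀, ∀ r ∈ Icc s (s + T), y r ≤ C * (y s + c s)) :
    Tendsto y atTop (𝓝 0) := by
  set grid : ℕ → ℝ := fun n => t₀ + n * T
  have hgrid : Tendsto grid atTop atTop :=
    tendsto_atTop_add_const_left _ _ (tendsto_natCast_atTop_atTop.atTop_mul_const hT)
  have hgrid_ge : ∀ n, grid n ≥ t₀ := fun n => le_add_of_nonneg_right (by positivity)
  have hgrid_values : Tendsto (fun n => y (grid n)) atTop (𝓝 0) := by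
    refine tendsto_zero_of_le_mul_add hq0 hq1 (fun n => hy0 _ (hgrid_ge n)) (fun n => ?_)
      (by simpa using (hc.comp hgrid).const_mul q)
    have hsucc : grid (n + 1) = grid n + T := by simp only [grid]; push_cast; ring
    simpa only [hsucc, mul_add] using hstep _ (hgrid_ge n)
  set idx : ℝ → ℕ := fun t => ⌊(t - t₀) / T⌋₊
  have hidx : Tendsto idx atTop atTop := tendsto_nat_floor_atTop.comp
    ((tendsto_atTop_add_const_right _ _ tendsto_id).atTop_div_const hT)
  have hbound : Tendsto (fun t => C * (y (grid (idx t)) + c (grid (idx t)))) atTop (𝓝 0) := by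
    have := ((hgrid_values.add (hc.comp hgrid)).const_mul C).comp hidx
    rwa [zero_add, mul_zero] at this
  refine tendsto_of_tendsto_of_tendsto_of_le_of_le' tendsto_const_nhds hbound ?_ ?_
  · filter_upwards [eventually_ge_atTop t₀] with t ht using hy0 t ht
  filter_upwards [eventually_ge_atTop t₀] with t ht
  have hfloor := Nat.floor_le (div_nonneg (sub_nonneg.2 ht) hT.le)
  have hfloor' := Nat.lt_floor_add_one ((t - t₀) / T)
  rw [le_div_iff₀ hT] at hfloor
  rw [div_lt_iff₀ hT] at hfloor'
  exact hwindow _ (hgrid_ge _) t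
    ⟨by simp only [grid, idx]; linarith, by simp only [grid, idx]; linarith⟩

theorem MeasureTheory.LocallyIntegrableOn.intervalIntegrable_of_mem_Ioi {E : Type*}
    [NormedAddCommGroup E] {f : ℝ → E} {c a b : ℝ} (hf : LocallyIntegrableOn f (Ioi c))
    (ha : c < a) (hb : c < b) : IntervalIntegrable f volume a b :=
  (hf.integrableOn_compact_subset (fun _ ht => (lt_min ha hb).trans_le ht.1)
    isCompact_uIcc).intervalIntegrable

/-- Specialization of the generalized Gronwall lemma: if `α(t) = K − φ(t)` with `K > 0`,
`φ ≥ 0` locally integrable with time averages eventually strictly below `K` in limsup,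
and `β ≥ 0` locally integrable with time averages tending to 0, then any nonnegative
absolutely continuous `y` with `y' + (K − φ)y ≤ β` a.e. tends to zero. -/
theorem gronwall_constant_minus_fluctuation
    (T K : ℝ) (hT : 0 < T) (hK : 0 < K)
    (φ β : ℝ → ℝ)
    (hφ_nonneg : ∀ t, 0 ≤ φ t)
    (hφ_loc : LocallyIntegrableOn φ (Set.Ioi 0))
    (hβ_nonneg : ∀ t, 0 ≤ β t)
    (hβ_loc : LocallyIntegrableOn β (Set.Ioi 0))
    (hφ_bdd : IsBoundedUnder (· ≤ ·) atTop (fun t => (1 / T) * ∫ τ in t..(t + T), φ τ))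
    (hφ_mean : limsup (fun t => (1 / T) * ∫ τ in t..(t + T), φ τ) atTop < K)
    (hβ_mean : Tendsto (fun t => (1 / T) * ∫ τ in t..(t + T), β τ) atTop (nhds 0))
    (y y' : ℝ → ℝ)
    (hy_nonneg : ∀ t, 0 < t → 0 ≤ y t)
    (hy_int : ∀ s t, 0 < s → s ≤ t → IntervalIntegrable y' volume s t)
    (hy_ac : ∀ s t, 0 < s → s ≤ t → y t - y s = ∫ τ in s..t, y' τ)
    (hineq : ∀ᵐ t ∂volume, t ∈ Set.Ioi (0:ℝ) → y' t + (K - φ t) * y t ≤ β t) :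
    Tendsto y atTop (nhds 0) := by
  obtain ⟨m, hLm, hmK⟩ := exists_between hφ_mean
  obtain ⟨t₀, ht₀⟩ := eventually_atTop.1
    ((eventually_lt_of_limsup_lt hLm hφ_bdd).and (eventually_gt_atTop 0))
  set c : ℝ → ℝ := fun s => Real.exp (K * T) * ∫ τ in s..(s + T), β τ
  have hc : Tendsto c atTop (𝓝 0) := by
    have := hβ_mean.const_mul (Real.exp (K * T) * T)
    rw [mul_zero] at this
    refine this.congr fun s => ?_
    simp only [c]
    field_simp
  have hc_nonneg : ∀ s, 0 ≤ c s := fun s => mul_nonneg (Real.exp_pos _).le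
    (intervalIntegral.integral_nonneg (by linarith) fun τ _ => hβ_nonneg τ)
  have hwindow : ∀ s ≥ t₀, ∀ r ∈ Icc s (s + T),
      y r ≤ Real.exp (T * m - K * (r - s)) * (y s + c s) := by
    intro s hs r hr
    obtain ⟨hmean, hs0⟩ := ht₀ s hs
    rw [one_div, inv_mul_lt_iff₀ hT] at hmean
    simpa only [add_sub_cancel_left] using le_exp_mul_of_deriv_add_const_sub_mul_le hr.1 hr.2
      hK.le (hy_nonneg s hs0) (hy_int s r hs0 hr.1) (fun t ht => hy_ac s t hs0 ht.1)
      (hφ_loc.intervalIntegrable_of_mem_Ioi hs0 (by linarith)) hφ_nonneg hmean.le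
      (hβ_loc.intervalIntegrable_of_mem_Ioi hs0 (by linarith)) hβ_nonneg
      (hineq.mono fun t h ht => h (hs0.trans_le ht.1))
  refine tendsto_zero_of_window_contraction (C := Real.exp (T * m)) hT (Real.exp_pos _).le
    (Real.exp_lt_one_iff.2 (mul_neg_of_pos_of_neg hT (sub_neg.2 hmK)))
    (fun t ht => hy_nonneg t (ht₀ t ht).2) hc (fun s hs => ?_) (fun s hs r hr => ?_)
  · convert hwindow s hs (s + T) ⟨le_add_of_nonneg_right hT.le, le_rfl⟩ using 3
    ring
  · refine (hwindow s hs r hr).trans (mul_le_mul_of_nonneg_right ?_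
      (add_nonneg (hy_nonneg s (ht₀ s hs).2) (hc_nonneg s)))
    exact Real.exp_le_exp.2 (by nlinarith [hr.1])
end

section
/- Suppose y : (0,∞) → [0,∞) is absolutely continuous and satisfies (1/2)y'(t) + ν z(t)² ≤ F z(t) a.e., where z(t) ≥ 0 with y(t) ≤ ρ² z(t)² (Poincaré), ν > 0, F ≥ 0, ρ > 0. Then for T = ρ²/ν: limsup_{t→∞}(1/T)∫_t^{t+T} z(τ)² dτ ≤ 2F²/ν². -/
open MeasureTheory Filter

set_option maxHeartbeats 2000000 in
/-- Abstract a priori bound on the time-averaged enstrophy: if `y` (the energy `|u|²`)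
is nonnegative, absolutely continuous, satisfies `(1/2)y' + νz² ≤ Fz` a.e. and the
Poincaré inequality `y ≤ ρ²z²`, then with `T = ρ²/ν`:
`limsup_{t→∞} (1/T)∫_t^{t+T} z² dτ ≤ 2F²/ν²`. -/
theorem abstract_enstrophy_bound
    (ρ ν F : ℝ) (hρ : 0 < ρ) (hν : 0 < ν) (hF : 0 ≤ F)
    (y y' z : ℝ → ℝ)
    (hy_nonneg : ∀ t, 0 < t → 0 ≤ y t)
    (hz_nonneg : ∀ t, 0 ≤ z t)
    (hy_int : ∀ s t, 0 < s → s ≤ t → IntervalIntegrable y' volume s t)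
    (hy_ac : ∀ s t, 0 < s → s ≤ t → y t - y s = ∫ τ in s..t, y' τ)
    (hz_loc : LocallyIntegrableOn (fun t => z t ^ 2) (Set.Ioi 0))
    (hpoincare : ∀ t, 0 < t → y t ≤ ρ ^ 2 * z t ^ 2)
    (hineq : ∀ᵐ t ∂volume, t ∈ Set.Ioi (0:ℝ) →
      (1 / 2) * y' t + ν * z t ^ 2 ≤ F * z t) :
    limsup (fun t => (1 / (ρ ^ 2 / ν)) * ∫ τ in t..(t + ρ ^ 2 / ν), z τ ^ 2) atTop ≤
      2 * F ^ 2 / ν ^ 2 := by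
  set T : ℝ := ρ ^ 2 / ν with hT_def
  have hρ2 : (0:ℝ) < ρ ^ 2 := pow_pos hρ 2
  have hT : 0 < T := div_pos hρ2 hν
  set C : ℝ := F ^ 2 / ν with hC_def
  have hC : 0 ≤ C := div_nonneg (sq_nonneg F) hν.le
  set k : ℝ := ν / ρ ^ 2 with hk_def
  have hk : 0 < k := div_pos hν hρ2
  -- interval integrability of z^2
  have hz_ii : ∀ s t : ℝ, 0 < s → s ≤ t →
      IntervalIntegrable (fun τ => z τ ^ 2) volume s t := by
    intro s t hs hst
    have hsub : Set.Icc s t ⊆ Set.Ioi (0:ℝ) := fun x hx => lt_of_lt_of_le hs hx.1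
    have := hz_loc.integrableOn_compact_subset hsub isCompact_Icc
    exact (this.mono_set (by rw [Set.uIcc_of_le hst])).intervalIntegrable
  have hint_nonneg : ∀ s t : ℝ, s ≤ t → 0 ≤ ∫ τ in s..t, z τ ^ 2 :=
    fun s t hst => intervalIntegral.integral_nonneg hst (fun u _ => sq_nonneg _)
  -- basic energy inequality
  have hE : ∀ s t : ℝ, 0 < s → s ≤ t →
      y t + ν * ∫ τ in s..t, z τ ^ 2 ≤ y s + C * (t - s) := by
    intro s t hs hst
    have hii := hz_ii s t hs hst
    have hgi : IntervalIntegrable (fun τ => C - ν * z τ ^ 2) volume s t :=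
      intervalIntegrable_const.sub (hii.const_mul ν)
    have hle : y' ≤ᵐ[volume.restrict (Set.Icc s t)] fun τ => C - ν * z τ ^ 2 := by
      rw [Filter.EventuallyLE, ae_restrict_iff' measurableSet_Icc]
      filter_upwards [hineq] with τ hτ hmem
      have h0 : (0:ℝ) < τ := lt_of_lt_of_le hs hmem.1
      have h1 := hτ h0
      have hCν : C * ν = F ^ 2 := div_mul_cancel₀ _ hν.ne'
      nlinarith [sq_nonneg (F - ν * z τ), hν]
    have hmono := intervalIntegral.integral_mono_ae_restrict hst (hy_int s t hs hst) hgi hle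
    have hcalc : (∫ τ in s..t, (C - ν * z τ ^ 2)) =
        C * (t - s) - ν * ∫ τ in s..t, z τ ^ 2 := by
      rw [intervalIntegral.integral_sub intervalIntegrable_const (hii.const_mul ν),
        intervalIntegral.integral_const_mul, intervalIntegral.integral_const, smul_eq_mul,
        mul_comm]
    have hfund := hy_ac s t hs hst
    rw [hcalc] at hmono
    linarith
  -- consequence 1 : growth bound
  have hA1 : ∀ s t : ℝ, 0 < s → s ≤ t → y t ≤ y s + C * (t - s) := by
    intro s t hs hst
    have h1 := hE s t hs hst
    nlinarith [hint_nonneg s t hst, hν]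
  -- one-step decay estimate
  have hB : ∀ t h : ℝ, 0 < t → 0 < h →
      (1 + k * h) * y (t + h) ≤ y t + C * h * (1 + k * h) := by
    intro t h ht hh
    have hle : t ≤ t + h := by linarith
    have hE' := hE t (t + h) ht hle
    have hpt : ∀ x ∈ Set.Icc t (t + h), (y (t + h) - C * h) / ρ ^ 2 ≤ z x ^ 2 := by
      intro x hx
      have hx0 : 0 < x := lt_of_lt_of_le ht hx.1
      have h1 := hA1 x (t + h) hx0 hx.2
      have h2 := hpoincare x hx0
      rw [div_le_iff₀ hρ2]
      nlinarith [mul_nonneg hC (show (0:ℝ) ≤ x - t by linarith [hx.1])]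
    have hmono := intervalIntegral.integral_mono_on hle intervalIntegrable_const
      (hz_ii t (t + h) ht hle) hpt
    rw [intervalIntegral.integral_const, smul_eq_mul] at hmono
    have hid : ν * ((t + h - t) * ((y (t + h) - C * h) / ρ ^ 2)) =
        k * h * (y (t + h) - C * h) := by
      rw [hk_def]; field_simp; ring
    have hνmono := mul_le_mul_of_nonneg_left hmono hν.le
    rw [hid] at hνmono
    nlinarith [hE', hνmono]
  -- iterated decay estimate
  have hCiter : ∀ h : ℝ, 0 < h → ∀ t : ℝ, 0 < t → ∀ n : ℕ,
      y (t + n * h) ≤ y t / (1 + k * h) ^ n + (C / k + C * h) := by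
    intro h hh t ht n
    have hQ : (0:ℝ) < 1 + k * h := by nlinarith [hk, hh]
    induction n with
    | zero =>
      simp only [Nat.cast_zero, zero_mul, add_zero, pow_zero, div_one]
      have h1 : 0 ≤ C / k := div_nonneg hC hk.le
      have h2 : 0 ≤ C * h := mul_nonneg hC hh.le
      linarith
    | succ n ih =>
      have htn : 0 < t + n * h := by positivity
      have hstep := hB (t + n * h) h htn hh
      have hQn : (0:ℝ) < (1 + k * h) ^ n := pow_pos hQ n
      have hcast : t + ((n:ℝ) + 1) * h = (t + n * h) + h := by ring
      rw [Nat.cast_succ, hcast]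
      -- from hstep and ih
      have h2 : (1 + k * h) * y ((t + n * h) + h) ≤
          (y t / (1 + k * h) ^ n + (C / k + C * h)) + C * h * (1 + k * h) := by
        nlinarith [hstep, ih, hQ]
      have heq : (C / k + C * h) + C * h * (1 + k * h) =
          (C / k + C * h) * (1 + k * h) := by field_simp
      have h3 : y ((t + n * h) + h) ≤
          ((y t / (1 + k * h) ^ n) + (C / k + C * h) * (1 + k * h)) / (1 + k * h) := by
        rw [le_div_iff₀ hQ]; nlinarith [h2, heq]
      calc y ((t + n * h) + h) ≤
          ((y t / (1 + k * h) ^ n) + (C / k + C * h) * (1 + k * h)) / (1 + k * h) := h3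
        _ = y t / (1 + k * h) ^ (n + 1) + (C / k + C * h) := by
            rw [add_div, mul_div_cancel_right₀ _ hQ.ne', pow_succ, div_div]
  -- eventual smallness of the energy
  have hsmall : ∀ ε : ℝ, 0 < ε → ∀ᶠ s in atTop, y s ≤ C / k + ε := by
    intro ε hε
    obtain ⟨h, hh, hCh⟩ : ∃ h : ℝ, 0 < h ∧ C * h ≤ ε / 4 := by
      refine ⟨ε / (4 * (C + 1)), div_pos hε (by nlinarith), ?_⟩
      rw [← mul_div_assoc, div_le_div_iff₀ (by nlinarith) (by norm_num : (0:ℝ) < 4)]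
      nlinarith [hC, hε.le]
    have hQ : (1:ℝ) < 1 + k * h := by nlinarith [hk, hh]
    have hQ0 : (0:ℝ) < 1 + k * h := by linarith
    have hqlt : (1 + k * h)⁻¹ < 1 := by
      rw [inv_lt_one_iff₀]; right; exact hQ
    have htend : Tendsto (fun n : ℕ => y 1 / (1 + k * h) ^ n) atTop (nhds 0) := by
      have h0 : Tendsto (fun n : ℕ => ((1 + k * h)⁻¹) ^ n) atTop (nhds 0) :=
        tendsto_pow_atTop_nhds_zero_of_lt_one (by positivity) hqlt
      have := h0.const_mul (y 1)
      rw [mul_zero] at this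
      simpa [div_eq_mul_inv, inv_pow] using this
    have hev : ∀ᶠ n : ℕ in atTop, y 1 / (1 + k * h) ^ n ≤ ε / 2 :=
      htend.eventually_le_const (by positivity)
    obtain ⟨N, hN⟩ := eventually_atTop.mp hev
    filter_upwards [eventually_ge_atTop (1 + ((N:ℝ) + 1) * h)] with s hs
    have hNh : (0:ℝ) ≤ ((N:ℝ) + 1) * h := by positivity
    have hs1 : 1 ≤ s := by linarith
    obtain ⟨n, hnN, hfl, hfl2⟩ : ∃ n : ℕ, N ≤ n ∧ (n:ℝ) * h ≤ s - 1 ∧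
        s - 1 < ((n:ℝ) + 1) * h := by
      have hdiv0 : 0 ≤ (s - 1) / h := div_nonneg (by linarith) hh.le
      refine ⟨⌊(s - 1) / h⌋₊, ?_, ?_, ?_⟩
      · apply Nat.le_floor
        rw [le_div_iff₀ hh]
        nlinarith [hh]
      · have h1 := Nat.floor_le hdiv0
        calc (⌊(s - 1) / h⌋₊ : ℝ) * h ≤ ((s - 1) / h) * h := by nlinarith [hh]
          _ = s - 1 := div_mul_cancel₀ _ hh.ne'
      · have h1 := Nat.lt_floor_add_one ((s - 1) / h)
        calc s - 1 = ((s - 1) / h) * h := (div_mul_cancel₀ _ hh.ne').symm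
          _ < ((⌊(s - 1) / h⌋₊ : ℝ) + 1) * h := by nlinarith [hh]
    have htn : (0:ℝ) < 1 + n * h := by positivity
    have h1 := hA1 (1 + n * h) s htn (by linarith)
    have h2 := hCiter h hh 1 one_pos n
    have h3 := hN n hnN
    have h4 : C * (s - (1 + n * h)) ≤ C * h :=
      mul_le_mul_of_nonneg_left (by linarith) hC
    linarith
  -- final eventual bound
  have hfinal : ∀ ε : ℝ, 0 < ε → ∀ᶠ t in atTop,
      (1 / T) * ∫ τ in t..(t + T), z τ ^ 2 ≤ 2 * F ^ 2 / ν ^ 2 + ε := by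
    intro ε hε
    have hε' : 0 < ε * (ν * T) := by positivity
    filter_upwards [hsmall _ hε', eventually_gt_atTop (0:ℝ)] with t hyt ht
    have hE2 := hE t (t + T) ht (by linarith)
    have hynn := hy_nonneg (t + T) (by linarith)
    have hCk : C / k = C * T := by
      rw [hk_def, hT_def, div_div_eq_mul_div, mul_div_assoc]
    have hI : ν * ∫ τ in t..(t + T), z τ ^ 2 ≤ 2 * C * T + ε * (ν * T) := by
      rw [hCk] at hyt; linarith
    rw [one_div, inv_mul_le_iff₀ hT]
    have hid : ν * (T * (2 * F ^ 2 / ν ^ 2 + ε)) = 2 * C * T + ε * (ν * T) := by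
      rw [hC_def, hT_def]; field_simp
    have := hI.trans_eq hid.symm
    exact le_of_mul_le_mul_left this hν
  -- conclude via limsup
  have hcb : IsCoboundedUnder (· ≤ ·) atTop
      (fun t => (1 / T) * ∫ τ in t..(t + T), z τ ^ 2) :=
    isCoboundedUnder_le_of_le atTop (x := 0) (fun t =>
      mul_nonneg (by positivity) (hint_nonneg t (t + T) (by linarith)))
  apply le_of_forall_pos_le_add
  intro ε hε
  exact limsup_le_of_le hcb (hfinal ε hε)
end
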